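/- arXiv:1004.1056 — 6 statements merged into one kernel-verified Lean document; each statement's English description precedes it below -/
import Mathlib

section
/- Let T be the real 3×3 tridiagonal matrix [[−1, b₁, 0], [1, k−b₁−c₂, b₂], [0, c₂, a₃−b₂]] with b₁, b₂, c₂ > 0, and let θ₁ > θ₂ > θ₃ be its eigenvalues (they are real and distinct). Then θ₂ = a₃ − b₂ implies k + 1 = c₃ + b₂, where c₃ := k − a₃ (i.e., b₂ − a₃ − 1 = 0). -/
open Polynomial

/-- Let `T` be the tridiagonal matrix `[[−1, b₁, 0], [1, k−b₁−c₂, b₂], [0, c₂, a₃−b₂]]`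
with `b₁, b₂, c₂ > 0`, and let `θ₁ > θ₂ > θ₃` be its (real, distinct) eigenvalues.
If `θ₂ = a₃ − b₂` then `k + 1 = c₃ + b₂` where `c₃ = k − a₃`. -/
theorem second_eigenvalue_eq_a3_sub_b2 (k b₁ b₂ c₂ a₃ θ₁ θ₂ θ₃ : ℝ)
    (hb₁ : 0 < b₁) (hb₂ : 0 < b₂) (hc₂ : 0 < c₂)
    (h12 : θ₁ > θ₂) (h23 : θ₂ > θ₃)
    (hchar : (!![-1, b₁, 0; 1, k - b₁ - c₂, b₂; 0, c₂, a₃ - b₂]).charpoly =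
      (X - C θ₁) * (X - C θ₂) * (X - C θ₃))
    (h2 : θ₂ = a₃ - b₂) :
    k + 1 = (k - a₃) + b₂ := by
  have h := congrArg (Polynomial.eval θ₂) hchar
  rw [Matrix.charpoly, Matrix.det_fin_three] at h
  simp [Matrix.charmatrix_apply, Matrix.diagonal] at h
  rw [h2] at h
  nlinarith [sq_nonneg (θ₂ - θ₁), mul_pos hb₂ hc₂]
end

section
/- Let T be a real tridiagonal n×n matrix with all subdiagonal and superdiagonal entries strictly positive, and suppose T has real eigenvalues. Then every eigenvector of T corresponding to its largest eigenvalue has all entries nonzero and of the same sign. -/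
/-!
A diagonal similarity `D T D⁻¹` with `D` positive makes `T` symmetric, because the products
`T i (i+1) * T (i+1) i` are positive; it changes neither the spectrum nor the signs of
eigenvectors. If `S` is symmetric with nonnegative off-diagonal entries and top eigenvalue `θ`,
then `θ - S` is positive semidefinite with nonpositive off-diagonal entries, so its quadratic form
at `|u|` is at most its value `0` at an eigenvector `u`: hence `|u|` is again a `θ`-eigenvector,
and so are `|v| + v` and `|v| - v`. A nonnegative eigenvector of an irreducible tridiagonal matrix
that vanishes at one index vanishes at its neighbours, hence everywhere; so each of `|v| ± v` is
either zero or everywhere positive, which forces a strict sign on `v`.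
-/

open Matrix Finset

namespace Matrix

variable {ι : Type*} [Fintype ι]

theorem abs_dotProduct_mulVec_abs_le {M : Matrix ι ι ℝ} (hM : ∀ i j, i ≠ j → M i j ≤ 0)
    (u : ι → ℝ) : |u| ⬝ᵥ M *ᵥ |u| ≤ u ⬝ᵥ M *ᵥ u := by
  rw [dot_mulVec_eq_sum_sum, dot_mulVec_eq_sum_sum]
  refine sum_le_sum fun j _ => sum_le_sum fun i _ => ?_
  rcases eq_or_ne i j with rfl | hij
  · simp only [Pi.abs_apply, mul_right_comm _ (M i i), abs_mul_abs_self, le_refl]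
  · have : u i * u j ≤ |u i| * |u j| := by rw [← abs_mul]; exact le_abs_self _
    simp only [Pi.abs_apply]
    nlinarith [hM i j hij]

theorem PosSemidef.mulVec_abs_eq_zero {M : Matrix ι ι ℝ} (hM : M.PosSemidef)
    (hoff : ∀ i j, i ≠ j → M i j ≤ 0) {u : ι → ℝ} (hu : M *ᵥ u = 0) : M *ᵥ |u| = 0 := by
  rw [← hM.dotProduct_mulVec_zero_iff, star_trivial]
  refine le_antisymm ?_ ?_
  · simpa [hu] using abs_dotProduct_mulVec_abs_le hoff u
  · simpa using hM.dotProduct_mulVec_nonneg |u|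

theorem IsHermitian.posSemidef_algebraMap_sub [DecidableEq ι] {S : Matrix ι ι ℝ}
    (hS : S.IsHermitian) {θ : ℝ} (hθ : ∀ μ ∈ spectrum ℝ S, μ ≤ θ) :
    (algebraMap ℝ (Matrix ι ι ℝ) θ - S).PosSemidef := by
  refine posSemidef_iff_isHermitian_and_spectrum_nonneg.2 ⟨?_, ?_⟩
  · exact (isHermitian_diagonal _).sub hS
  · rw [← spectrum.singleton_sub_eq]
    rintro _ ⟨_, rfl, μ, hμ, rfl⟩
    exact sub_nonneg.2 (hθ μ hμ)

theorem IsHermitian.mulVec_abs_eq_smul [DecidableEq ι] {S : Matrix ι ι ℝ} (hS : S.IsHermitian)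
    (hoff : ∀ i j, i ≠ j → 0 ≤ S i j) {θ : ℝ} (hθ : ∀ μ ∈ spectrum ℝ S, μ ≤ θ) {u : ι → ℝ}
    (hu : S *ᵥ u = θ • u) : S *ᵥ |u| = θ • |u| := by
  have hmulVec (x : ι → ℝ) : (algebraMap ℝ (Matrix ι ι ℝ) θ - S) *ᵥ x = θ • x - S *ᵥ x := by
    rw [sub_mulVec, Algebra.algebraMap_eq_smul_one, smul_mulVec, one_mulVec]
  have := (hS.posSemidef_algebraMap_sub hθ).mulVec_abs_eq_zero
    (fun i j hij => by simpa [algebraMap_eq_diagonal, hij] using hoff i j hij)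
    (by rw [hmulVec, hu, sub_self])
  rwa [hmulVec, sub_eq_zero, eq_comm] at this

theorem diagonal_mulVec_eq_mul [DecidableEq ι] {R : Type*} [NonUnitalNonAssocSemiring R]
    (d x : ι → R) : diagonal d *ᵥ x = d * x :=
  funext (mulVec_diagonal d x)

theorem spectrum_diagonal_mul_mul_diagonal_inv [DecidableEq ι] {K : Type*} [Field K]
    {d : ι → K} (hd : ∀ i, d i ≠ 0) (A : Matrix ι ι K) :
    spectrum K (diagonal d * A * diagonal d⁻¹) = spectrum K A :=
  spectrum.units_conjugate (u := ⟨diagonal d, diagonal d⁻¹, by simp [hd], by simp [hd]⟩)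

theorem diagonal_mul_mul_diagonal_inv_mulVec [DecidableEq ι] {K : Type*} [Field K]
    {d : ι → K} (hd : ∀ i, d i ≠ 0) (A : Matrix ι ι K) (x : ι → K) :
    (diagonal d * A * diagonal d⁻¹) *ᵥ (d * x) = d * (A *ᵥ x) := by
  rw [← mulVec_mulVec, ← mulVec_mulVec, diagonal_mulVec_eq_mul, diagonal_mulVec_eq_mul,
    ← mul_assoc, show d⁻¹ * d = 1 from funext fun i => inv_mul_cancel₀ (hd i), one_mul]

theorem diagonal_mul_mul_diagonal_inv_apply [DecidableEq ι] {K : Type*} [Field K]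
    (d : ι → K) (A : Matrix ι ι K) (i j : ι) :
    (diagonal d * A * diagonal d⁻¹) i j = d i * A i j * (d j)⁻¹ := by
  rw [mul_diagonal, diagonal_mul, Pi.inv_apply]

theorem mulVec_abs_eq_smul_of_isHermitian_diagonal_mul_mul_diagonal_inv [DecidableEq ι]
    {T : Matrix ι ι ℝ} {d : ι → ℝ} (hd : ∀ i, 0 < d i)
    (hS : (diagonal d * T * diagonal d⁻¹).IsHermitian)
    (hoff : ∀ i j, i ≠ j → 0 ≤ T i j) {θ : ℝ} (hθ : ∀ μ ∈ spectrum ℝ T, μ ≤ θ) {v : ι → ℝ}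
    (hv : T *ᵥ v = θ • v) : T *ᵥ |v| = θ • |v| := by
  have hd0 (i : ι) : d i ≠ 0 := (hd i).ne'
  have hSv := hS.mulVec_abs_eq_smul (u := d * v)
    (fun i j hij => by
      rw [diagonal_mul_mul_diagonal_inv_apply]
      exact mul_nonneg (mul_nonneg (hd i).le (hoff i j hij)) (inv_nonneg.2 (hd j).le))
    (by rwa [spectrum_diagonal_mul_mul_diagonal_inv hd0])
    (by rw [diagonal_mul_mul_diagonal_inv_mulVec hd0, hv, mul_smul_comm])
  have habs : |d * v| = d * |v| := by
    ext i
    simp only [Pi.abs_apply, Pi.mul_apply, abs_mul, abs_of_pos (hd i)]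
  rw [habs, diagonal_mul_mul_diagonal_inv_mulVec hd0, ← mul_smul_comm] at hSv
  exact funext fun i => mul_left_cancel₀ (hd0 i) (congrFun hSv i)

theorem eq_zero_of_mulVec_eq_smul_of_nonneg {A : Matrix ι ι ℝ} (hoff : ∀ i j, i ≠ j → 0 ≤ A i j)
    {x : ι → ℝ} (hx : 0 ≤ x) {c : ℝ} (hAx : A *ᵥ x = c • x) {i j : ι} (hi : x i = 0)
    (hij : 0 < A i j) : x j = 0 := by
  have hrow : ∑ k, A i k * x k = 0 := by
    simpa [mulVec, dotProduct, hi] using congrFun hAx i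
  have hterm (k : ι) (_ : k ∈ univ) : 0 ≤ A i k * x k := by
    rcases eq_or_ne i k with rfl | hik
    · simp [hi]
    · exact mul_nonneg (hoff i k hik) (hx k)
  exact (mul_eq_zero.1 ((sum_eq_zero_iff_of_nonneg hterm).1 hrow j (mem_univ j))).resolve_left
    hij.ne'

end Matrix

theorem Fin.tridiagonal_cases {n : ℕ} {P : Fin n → Fin n → Prop}
    (far : ∀ i j : Fin n, (i.val + 2 ≤ j.val ∨ j.val + 2 ≤ i.val) → P i j)
    (diag : ∀ i, P i i) (sup : ∀ i : Fin n, ∀ h : i.val + 1 < n, P i ⟨i.val + 1, h⟩)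
    (sub : ∀ i : Fin n, ∀ h : i.val + 1 < n, P ⟨i.val + 1, h⟩ i) (i j : Fin n) : P i j := by
  obtain ⟨a, ha⟩ := i
  obtain ⟨b, hb⟩ := j
  rcases (by omega : a + 2 ≤ b ∨ b + 2 ≤ a ∨ a = b ∨ b = a + 1 ∨ a = b + 1)
    with h | h | rfl | rfl | rfl
  · exact far _ _ (Or.inl h)
  · exact far _ _ (Or.inr h)
  · exact diag _
  · exact sup ⟨a, ha⟩ hb
  · exact sub ⟨b, hb⟩ ha

theorem Fin.iff_of_forall_iff_succ {n : ℕ} {P : Fin n → Prop}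
    (h : ∀ i : Fin n, ∀ hi : i.val + 1 < n, P i ↔ P ⟨i.val + 1, hi⟩) (i j : Fin n) :
    P i ↔ P j := by
  have key (k : ℕ) (hk : k < n) : P ⟨k, hk⟩ ↔ P ⟨0, by omega⟩ := by
    induction k with
    | zero => rfl
    | succ k ih => exact (h ⟨k, by omega⟩ hk).symm.trans (ih _)
  exact (key i i.2).trans (key j j.2).symm

namespace Matrix

def IsTridiagonal {R : Type*} [Zero R] {n : ℕ} (A : Matrix (Fin n) (Fin n) R) : Prop :=
  ∀ i j : Fin n, (i.val + 2 ≤ j.val ∨ j.val + 2 ≤ i.val) → A i j = 0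

namespace IsTridiagonal

variable {n : ℕ}

theorem isSymm {R : Type*} [Zero R] {A : Matrix (Fin n) (Fin n) R} (hA : A.IsTridiagonal)
    (hadj : ∀ i : Fin n, ∀ h : i.val + 1 < n, A ⟨i.val + 1, h⟩ i = A i ⟨i.val + 1, h⟩) :
    A.IsSymm :=
  IsSymm.ext <| Fin.tridiagonal_cases (fun i j h => by rw [hA i j h, hA j i h.symm])
    (fun _ => rfl) hadj (fun i h => (hadj i h).symm)

theorem diagonal_mul_mul_diagonal_inv {K : Type*} [Field K] {A : Matrix (Fin n) (Fin n) K}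
    (hA : A.IsTridiagonal) (d : Fin n → K) : (diagonal d * A * diagonal d⁻¹).IsTridiagonal :=
  fun i j h => by rw [diagonal_mul_mul_diagonal_inv_apply, hA i j h, mul_zero, zero_mul]

variable {T : Matrix (Fin n) (Fin n) ℝ}

theorem offDiag_nonneg (hT : T.IsTridiagonal)
    (hsup : ∀ i : Fin n, ∀ h : i.val + 1 < n, 0 < T i ⟨i.val + 1, h⟩)
    (hsub : ∀ i : Fin n, ∀ h : i.val + 1 < n, 0 < T ⟨i.val + 1, h⟩ i) :
    ∀ i j, i ≠ j → 0 ≤ T i j :=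
  Fin.tridiagonal_cases (fun i j h _ => (hT i j h).ge) (fun _ h => absurd rfl h)
    (fun i h _ => (hsup i h).le) (fun i h _ => (hsub i h).le)

theorem exists_pos_isHermitian_diagonal_mul_mul_diagonal_inv (hT : T.IsTridiagonal)
    (hsup : ∀ i : Fin n, ∀ h : i.val + 1 < n, 0 < T i ⟨i.val + 1, h⟩)
    (hsub : ∀ i : Fin n, ∀ h : i.val + 1 < n, 0 < T ⟨i.val + 1, h⟩ i) :
    ∃ d : Fin n → ℝ, (∀ i, 0 < d i) ∧ (diagonal d * T * diagonal d⁻¹).IsHermitian := by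
  -- `d = √w` for weights `w` with `w (i + 1) * T (i + 1) i = w i * T i (i + 1)`
  let r (k : ℕ) : ℝ :=
    if h : k + 1 < n then T ⟨k, by omega⟩ ⟨k + 1, h⟩ / T ⟨k + 1, h⟩ ⟨k, by omega⟩ else 1
  let w (k : ℕ) : ℝ := ∏ j ∈ range k, r j
  have hr (k : ℕ) : 0 < r k := by
    unfold r
    split_ifs with h
    · exact div_pos (hsup ⟨k, by omega⟩ h) (hsub ⟨k, by omega⟩ h)
    · exact one_pos
  have hw (k : ℕ) : 0 < w k := prod_pos fun j _ => hr j
  refine ⟨fun i => √(w i), fun i => Real.sqrt_pos.2 (hw i), ?_⟩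
  refine isHermitian_iff_isSymm.2 ((hT.diagonal_mul_mul_diagonal_inv _).isSymm fun i h => ?_)
  have hbalance : w (i + 1) * T ⟨i + 1, h⟩ i = w i * T i ⟨i + 1, h⟩ := by
    simp only [w, prod_range_succ, r, dif_pos h]
    field_simp [(hsub i h).ne']
  simp only [diagonal_mul_mul_diagonal_inv_apply]
  have h0 := Real.sqrt_pos.2 (hw i)
  have h1 := Real.sqrt_pos.2 (hw (i + 1))
  field_simp
  rwa [Real.sq_sqrt (hw _).le, Real.sq_sqrt (hw _).le]

theorem eq_zero_or_pos_of_mulVec_eq_smul (hT : T.IsTridiagonal)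
    (hsup : ∀ i : Fin n, ∀ h : i.val + 1 < n, 0 < T i ⟨i.val + 1, h⟩)
    (hsub : ∀ i : Fin n, ∀ h : i.val + 1 < n, 0 < T ⟨i.val + 1, h⟩ i)
    {x : Fin n → ℝ} (hx : 0 ≤ x) {c : ℝ} (hTx : T *ᵥ x = c • x) : x = 0 ∨ ∀ i, 0 < x i := by
  have hoff := hT.offDiag_nonneg hsup hsub
  have hzero (i : Fin n) (h : i.val + 1 < n) : x i = 0 ↔ x ⟨i.val + 1, h⟩ = 0 :=
    ⟨fun hi => eq_zero_of_mulVec_eq_smul_of_nonneg hoff hx hTx hi (hsup i h),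
      fun hi => eq_zero_of_mulVec_eq_smul_of_nonneg hoff hx hTx hi (hsub i h)⟩
  by_cases hvanish : ∃ i, x i = 0
  · obtain ⟨i, hi⟩ := hvanish
    exact .inl <| funext fun j => (Fin.iff_of_forall_iff_succ hzero i j).1 hi
  · push Not at hvanish
    exact .inr fun i => (hx i).lt_of_ne (hvanish i).symm

theorem forall_pos_or_forall_neg_of_mulVec_abs_eq_smul (hT : T.IsTridiagonal)
    (hsup : ∀ i : Fin n, ∀ h : i.val + 1 < n, 0 < T i ⟨i.val + 1, h⟩)
    (hsub : ∀ i : Fin n, ∀ h : i.val + 1 < n, 0 < T ⟨i.val + 1, h⟩ i)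
    {v : Fin n → ℝ} (hv : v ≠ 0) {c : ℝ} (heig : T *ᵥ v = c • v) (habs : T *ᵥ |v| = c • |v|) :
    (∀ i, 0 < v i) ∨ (∀ i, v i < 0) := by
  -- `|v| + v` and `|v| - v` are twice the positive and negative parts of `v`
  have hpos : T *ᵥ (|v| + v) = c • (|v| + v) := by rw [mulVec_add, habs, heig, smul_add]
  have hneg : T *ᵥ (|v| - v) = c • (|v| - v) := by rw [mulVec_sub, habs, heig, smul_sub]
  rcases hT.eq_zero_or_pos_of_mulVec_eq_smul hsup hsub
    (fun i => neg_le_iff_add_nonneg'.1 (neg_abs_le (v i))) hpos with hpos0 | hpos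
  · rcases hT.eq_zero_or_pos_of_mulVec_eq_smul hsup hsub
      (fun i => sub_nonneg.2 (le_abs_self (v i))) hneg with hneg0 | hneg
    · refine absurd (funext fun i => ?_) hv
      have h₁ : |v i| + v i = 0 := congrFun hpos0 i
      have h₂ : |v i| - v i = 0 := congrFun hneg0 i
      show v i = 0
      linarith
    · refine .inr fun i => ?_
      have : 0 < |v i| - v i := hneg i
      rcases abs_cases (v i) with ⟨h, _⟩ | ⟨h, _⟩ <;> linarith
  · refine .inl fun i => ?_
    have : 0 < |v i| + v i := hpos i
    rcases abs_cases (v i) with ⟨h, _⟩ | ⟨h, _⟩ <;> linarith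

end IsTridiagonal

end Matrix

theorem tridiagonal_top_eigenvector_sign_general (n : ℕ)
    (T : Matrix (Fin n) (Fin n) ℝ)
    (htri : ∀ i j : Fin n, (i.val + 2 ≤ j.val ∨ j.val + 2 ≤ i.val) → T i j = 0)
    (hsup : ∀ i : Fin n, ∀ h : i.val + 1 < n, 0 < T i ⟨i.val + 1, h⟩)
    (hsub : ∀ i : Fin n, ∀ h : i.val + 1 < n, 0 < T ⟨i.val + 1, h⟩ i)
    (θ : ℝ) (hθmax : ∀ μ ∈ spectrum ℝ T, μ ≤ θ)
    (v : Fin n → ℝ) (hv : v ≠ 0) (heig : T.mulVec v = θ • v) :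
    (∀ i, 0 < v i) ∨ (∀ i, v i < 0) := by
  have hT : T.IsTridiagonal := htri
  obtain ⟨d, hd, hS⟩ := hT.exists_pos_isHermitian_diagonal_mul_mul_diagonal_inv hsup hsub
  have habs : T *ᵥ |v| = θ • |v| :=
    mulVec_abs_eq_smul_of_isHermitian_diagonal_mul_mul_diagonal_inv hd hS
      (hT.offDiag_nonneg hsup hsub) hθmax heig
  exact hT.forall_pos_or_forall_neg_of_mulVec_abs_eq_smul hsup hsub hv heig habs

/-- Perron–Frobenius for irreducible tridiagonal matrices: if `T` is a real tridiagonal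
matrix with strictly positive sub- and superdiagonal entries and all eigenvalues real,
then every eigenvector for the largest eigenvalue has all entries nonzero and of the
same sign. -/
theorem tridiagonal_top_eigenvector_sign (n : ℕ) (hn : 0 < n)
    (T : Matrix (Fin n) (Fin n) ℝ)
    (htri : ∀ i j : Fin n, (i.val + 2 ≤ j.val ∨ j.val + 2 ≤ i.val) → T i j = 0)
    (hsup : ∀ i : Fin n, ∀ h : i.val + 1 < n, 0 < T i ⟨i.val + 1, h⟩)
    (hsub : ∀ i : Fin n, ∀ h : i.val + 1 < n, 0 < T ⟨i.val + 1, h⟩ i)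
    (hreal : ∀ μ ∈ spectrum ℂ (T.map (Complex.ofReal)), μ.im = 0)
    (θ : ℝ) (hθmem : θ ∈ spectrum ℝ T) (hθmax : ∀ μ ∈ spectrum ℝ T, μ ≤ θ)
    (v : Fin n → ℝ) (hv : v ≠ 0) (heig : T.mulVec v = θ • v) :
    (∀ i, 0 < v i) ∨ (∀ i, v i < 0) :=
  tridiagonal_top_eigenvector_sign_general n T htri hsup hsub θ hθmax v hv heig
end

section
/- Let θ₁ > θ₂ > θ₃ be the eigenvalues of the real 3×3 matrix T = [[−1, b₁, 0], [1, k−b₁−c₂, b₂], [0, c₂, a₃−b₂]], where b₁, b₂, c₂ > 0 and k, a₃ are real. If θ₂ = −1, then (θ₁+1)(θ₃+1) = −b₁ − b₂c₂, and in particular (θ₁+1)(θ₃+1) < −b₁. -/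
open Polynomial

/-- If `θ₁ > θ₂ > θ₃` are the eigenvalues of
`T = [[−1, b₁, 0], [1, k−b₁−c₂, b₂], [0, c₂, a₃−b₂]]` with `b₁, b₂, c₂ > 0`
and `θ₂ = −1`, then `(θ₁+1)(θ₃+1) = −b₁ − b₂c₂ < −b₁`. -/
theorem theta2_eq_neg_one_product (k b₁ b₂ c₂ a₃ θ₁ θ₂ θ₃ : ℝ)
    (hb₁ : 0 < b₁) (hb₂ : 0 < b₂) (hc₂ : 0 < c₂)
    (h12 : θ₁ > θ₂) (h23 : θ₂ > θ₃)
    (hchar : (!![-1, b₁, 0; 1, k - b₁ - c₂, b₂; 0, c₂, a₃ - b₂]).charpoly =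
      (X - C θ₁) * (X - C θ₂) * (X - C θ₃))
    (h2 : θ₂ = -1) :
    (θ₁ + 1) * (θ₃ + 1) = -b₁ - b₂ * c₂ ∧ (θ₁ + 1) * (θ₃ + 1) < -b₁ := by
  subst h2
  have hA := congrArg (fun p : ℝ[X] => p.eval (-1)) hchar
  have hB := congrArg (fun p : ℝ[X] => p.derivative.eval (-1)) hchar
  rw [Matrix.charpoly, Matrix.det_fin_three] at hA hB
  simp [Matrix.charmatrix_apply, Matrix.diagonal] at hA hB
  have hA' : -1 - (a₃ - b₂) = 0 := hA.resolve_left (by positivity)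
  have key : (θ₁ + 1) * (θ₃ + 1) = -b₁ - b₂ * c₂ := by
    linear_combination -hB + (-1 - (k - b₁ - c₂)) * hA'
  exact ⟨key, by nlinarith [mul_pos hb₂ hc₂]⟩
end

section
/- Let Γ be a distance-regular graph of diameter 3 with valency k and intersection numbers b₁, b₂, c₂, c₃ (so a₃ = k − c₃), and distinct eigenvalues k > θ₁ > θ₂ > θ₃. Then θ₂ lies in the closed interval between −1 and a₃ − b₂. -/
/-- A connected finite graph is distance-regular with diameter `D` and intersection
numbers `b i`, `c i` if for any vertices `x, y` at distance `i`, `y` has exactly `b i`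
neighbors at distance `i+1` from `x`, and (for `i ≥ 1`) exactly `c i` neighbors at
distance `i−1` from `x`. -/
def IsDistanceRegular {V : Type*} [Fintype V] (G : SimpleGraph V)
    (D : ℕ) (b c : ℕ → ℕ) : Prop :=
  G.Connected ∧
  (∀ x y : V, G.dist x y ≤ D) ∧ (∃ x y : V, G.dist x y = D) ∧
  (∀ (x y : V) (i : ℕ), G.dist x y = i →
      {z : V | G.Adj y z ∧ G.dist x z = i + 1}.ncard = b i) ∧
  (∀ (x y : V) (i : ℕ), 1 ≤ i → G.dist x y = i →
      {z : V | G.Adj y z ∧ G.dist x z = i - 1}.ncard = c i)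

open SimpleGraph Finset Matrix

lemma dist_getVert_le' {V : Type*} {G : SimpleGraph V} (hc : G.Connected)
    {x y : V} (w : G.Walk x y) : ∀ i, i ≤ w.length → G.dist x (w.getVert i) ≤ i := by
  intro i
  induction i with
  | zero => intro _; simp [w.getVert_zero]
  | succ n ih =>
    intro hn
    have h1 : G.dist x (w.getVert n) ≤ n := ih (by omega)
    have h2 : G.Adj (w.getVert n) (w.getVert (n+1)) := w.adj_getVert_succ (by omega)
    calc G.dist x (w.getVert (n+1))
        ≤ G.dist x (w.getVert n) + G.dist (w.getVert n) (w.getVert (n+1)) :=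
          hc.dist_triangle
      _ ≤ n + 1 := by
          have : G.dist (w.getVert n) (w.getVert (n+1)) = 1 :=
            SimpleGraph.dist_eq_one_iff_adj.mpr h2
          omega

lemma exists_chain' {V : Type*} {G : SimpleGraph V} (hc : G.Connected)
    {x y : V} (h3 : G.dist x y = 3) :
    ∃ g : ℕ → V, (∀ i ≤ 3, G.dist (g 0) (g i) = i) ∧ (∀ i < 3, G.Adj (g i) (g (i+1))) := by
  obtain ⟨w, hw⟩ := (hc x y).exists_walk_length_eq_dist
  rw [h3] at hw
  refine ⟨fun i => w.getVert i, ?_, ?_⟩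
  · intro i hi
    have hup : G.dist x (w.getVert i) ≤ i := by
      have := dist_getVert_le' hc w i (by omega)
      simpa [w.getVert_zero] using this
    have hdown : G.dist y (w.getVert i) ≤ 3 - i := by
      have h := dist_getVert_le' hc w.reverse (3 - i) (by simp; omega)
      rw [w.getVert_reverse] at h
      have : w.length - (3 - i) = i := by omega
      rwa [this] at h
    have htri : G.dist x y ≤ G.dist x (w.getVert i) + G.dist (w.getVert i) y :=
      hc.dist_triangle
    rw [SimpleGraph.dist_comm] at hdown
    simp only [w.getVert_zero]
    omega
  · intro i hi
    simpa [w.getVert_zero] using w.adj_getVert_succ (by omega)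

lemma cubic_of_roots' {α β γ θ₁ θ₂ θ₃ : ℝ} (h12 : θ₁ ≠ θ₂) (h13 : θ₁ ≠ θ₃) (h23 : θ₂ ≠ θ₃)
    (e1 : θ₁^3 + α*θ₁^2 + β*θ₁ + γ = 0)
    (e2 : θ₂^3 + α*θ₂^2 + β*θ₂ + γ = 0)
    (e3 : θ₃^3 + α*θ₃^2 + β*θ₃ + γ = 0) :
    ∀ x : ℝ, x^3 + α*x^2 + β*x + γ = (x - θ₁)*(x - θ₂)*(x - θ₃) := by
  have h12' : θ₁ - θ₂ ≠ 0 := sub_ne_zero.mpr h12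
  have h13' : θ₁ - θ₃ ≠ 0 := sub_ne_zero.mpr h13
  have h23' : θ₂ - θ₃ ≠ 0 := sub_ne_zero.mpr h23
  have E12 : θ₁^2 + θ₁*θ₂ + θ₂^2 + α*(θ₁+θ₂) + β = 0 := by
    have h : (θ₁ - θ₂) * (θ₁^2 + θ₁*θ₂ + θ₂^2 + α*(θ₁+θ₂) + β) = 0 := by
      linear_combination e1 - e2
    rcases mul_eq_zero.mp h with h | h
    · exact absurd h h12'
    · exact h
  have E13 : θ₁^2 + θ₁*θ₃ + θ₃^2 + α*(θ₁+θ₃) + β = 0 := by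
    have h : (θ₁ - θ₃) * (θ₁^2 + θ₁*θ₃ + θ₃^2 + α*(θ₁+θ₃) + β) = 0 := by
      linear_combination e1 - e3
    rcases mul_eq_zero.mp h with h | h
    · exact absurd h h13'
    · exact h
  have hA : θ₁ + θ₂ + θ₃ + α = 0 := by
    have h : (θ₂ - θ₃) * (θ₁ + θ₂ + θ₃ + α) = 0 := by
      linear_combination E12 - E13
    rcases mul_eq_zero.mp h with h | h
    · exact absurd h h23'
    · exact h
  have hB : β = θ₁*θ₂ + θ₁*θ₃ + θ₂*θ₃ := by
    linear_combination E12 - (θ₁ + θ₂) * hA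
  have hC : γ = -(θ₁*θ₂*θ₃) := by
    linear_combination e1 - θ₁^2 * hA - θ₁ * hB
  intro x
  linear_combination x^2*hA + x*hB + hC

lemma theta_key' {θ₁ θ₂ θ₃ d₂ d₃ B C : ℝ} (hB : 0 < B) (hC : 0 < C)
    (h12 : θ₂ < θ₁) (h23 : θ₃ < θ₂)
    (hq : ∀ x : ℝ, (x - θ₁)*(x - θ₂)*(x - θ₃)
        = (x+1)*(x-d₂)*(x-d₃) - B*(x+1) - C*(x-d₃)) :
    min (-1) d₃ ≤ θ₂ ∧ θ₂ ≤ max (-1) d₃ := by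
  have hm1 : (-1-θ₁)*(-1-θ₂)*(-1-θ₃) = -C*(-1-d₃) := by linear_combination hq (-1)
  have hd3 : (d₃-θ₁)*(d₃-θ₂)*(d₃-θ₃) = -B*(d₃+1) := by linear_combination hq d₃
  rcases lt_trichotomy d₃ (-1) with hlt | heq | hgt
  · have hq3 : (0:ℝ) < (d₃-θ₁)*(d₃-θ₂)*(d₃-θ₃) := by nlinarith
    have hqm : (-1-θ₁)*(-1-θ₂)*(-1-θ₃) < 0 := by nlinarith
    have h1 : d₃ ≤ θ₂ := by
      by_contra h
      push_neg at h
      have f2 : 0 < d₃ - θ₂ := by linarith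
      have f3 : 0 < d₃ - θ₃ := by linarith
      have f1 : 0 < d₃ - θ₁ := by nlinarith [mul_pos f2 f3]
      nlinarith [mul_pos (mul_pos (show (0:ℝ) < -1-θ₁ by linarith)
        (show (0:ℝ) < -1-θ₂ by linarith)) (show (0:ℝ) < -1-θ₃ by linarith)]
    have h2 : θ₂ ≤ -1 := by
      by_contra h
      push_neg at h
      have f1 : -1-θ₁ < 0 := by linarith
      have f2 : -1-θ₂ < 0 := by linarith
      have f3 : -1-θ₃ < 0 := by
        nlinarith [mul_pos (show (0:ℝ) < θ₁+1 by linarith) (show (0:ℝ) < θ₂+1 by linarith)]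
      nlinarith [mul_pos (mul_pos (show (0:ℝ) < θ₁-d₃ by linarith)
        (show (0:ℝ) < θ₂-d₃ by linarith)) (show (0:ℝ) < θ₃-d₃ by linarith)]
    exact ⟨le_trans (min_le_right _ _) h1, le_trans h2 (le_max_left _ _)⟩
  · subst heq
    have h0 : (-1-θ₁)*(-1-θ₂)*(-1-θ₃) = 0 := by linarith [hm1]
    have hθ2 : θ₂ = -1 := by
      rcases mul_eq_zero.mp h0 with h | h
      · rcases mul_eq_zero.mp h with h | h
        · exfalso
          have hθ1 : θ₁ = -1 := by linarith
          have key2 : (-1-θ₂)*(-1-θ₃) + B + C = 0 := by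
            have e0 := hq 0
            have e1 := hq 1
            have e2 := hq 2
            rw [hθ1] at e0 e1 e2
            linear_combination 3*e0 - (3/2)*e1 + (1/3)*e2
          nlinarith [mul_pos (show (0:ℝ) < -1-θ₂ by linarith)
            (show (0:ℝ) < -1-θ₃ by linarith)]
        · linarith
      · exfalso
        have hθ3 : θ₃ = -1 := by linarith
        have key2 : (-1-θ₁)*(-1-θ₂) + B + C = 0 := by
          have e0 := hq 0
          have e1 := hq 1
          have e2 := hq 2
          rw [hθ3] at e0 e1 e2
          linear_combination 3*e0 - (3/2)*e1 + (1/3)*e2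
        nlinarith [mul_pos (show (0:ℝ) < θ₁+1 by linarith)
          (show (0:ℝ) < θ₂+1 by linarith)]
    rw [hθ2]
    simp
  · have hq3 : (d₃-θ₁)*(d₃-θ₂)*(d₃-θ₃) < 0 := by nlinarith
    have hqm : (0:ℝ) < (-1-θ₁)*(-1-θ₂)*(-1-θ₃) := by nlinarith
    have h1 : -1 ≤ θ₂ := by
      by_contra h
      push_neg at h
      have f2 : 0 < -1 - θ₂ := by linarith
      have f3 : 0 < -1 - θ₃ := by linarith
      have f1 : 0 < -1 - θ₁ := by nlinarith [mul_pos f2 f3]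
      nlinarith [mul_pos (mul_pos (show (0:ℝ) < d₃-θ₁ by linarith)
        (show (0:ℝ) < d₃-θ₂ by linarith)) (show (0:ℝ) < d₃-θ₃ by linarith)]
    have h2 : θ₂ ≤ d₃ := by
      by_contra h
      push_neg at h
      have f1 : d₃-θ₁ < 0 := by linarith
      have f2 : d₃-θ₂ < 0 := by linarith
      have f3 : d₃ < θ₃ := by
        nlinarith [mul_pos (show (0:ℝ) < θ₁-d₃ by linarith)
          (show (0:ℝ) < θ₂-d₃ by linarith)]
      nlinarith [mul_pos (mul_pos (show (0:ℝ) < θ₁+1 by linarith)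
        (show (0:ℝ) < θ₂+1 by linarith)) (show (0:ℝ) < θ₃+1 by linarith)]
    exact ⟨le_trans (min_le_left _ _) h1, le_trans h2 (le_max_right _ _)⟩

/-- For a distance-regular graph of diameter 3 with distinct eigenvalues
`k > θ₁ > θ₂ > θ₃`, the eigenvalue `θ₂` lies in the closed interval between `−1`
and `a₃ − b₂`, where `a₃ = k − c 3` and `b₂ = b 2`. -/
theorem theta2_between {V : Type*} [Fintype V] [DecidableEq V]
    (G : SimpleGraph V) [DecidableRel G.Adj] (b c : ℕ → ℕ)
    (hdrg : IsDistanceRegular G 3 b c)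
    (k : ℕ) (hk : k = b 0)
    (θ₁ θ₂ θ₃ : ℝ) (h01 : (k : ℝ) > θ₁) (h12 : θ₁ > θ₂) (h23 : θ₂ > θ₃)
    (hspec : spectrum ℝ (G.adjMatrix ℝ) = {(k : ℝ), θ₁, θ₂, θ₃}) :
    min (-1 : ℝ) ((k : ℝ) - c 3 - b 2) ≤ θ₂ ∧
      θ₂ ≤ max (-1 : ℝ) ((k : ℝ) - c 3 - b 2) := by
  obtain ⟨hconn, hdle, hdex, hb, hcax⟩ := hdrg
  obtain ⟨x₀, y₀, hxy0⟩ := hdex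
  obtain ⟨g, hgd, hga⟩ := exists_chain' hconn hxy0
  -- distances along the chain
  have hg1 : G.dist (g 0) (g 1) = 1 := hgd 1 (by norm_num)
  have hg2 : G.dist (g 0) (g 2) = 2 := hgd 2 (by norm_num)
  have hg3 : G.dist (g 0) (g 3) = 3 := hgd 3 (by norm_num)
  -- c 1 = 1
  have hc1 : c 1 = 1 := by
    have h := hcax (g 0) (g 1) 1 le_rfl hg1
    have hset : {z : V | G.Adj (g 1) z ∧ G.dist (g 0) z = 1 - 1} = {g 0} := by
      ext z
      simp only [Set.mem_setOf_eq, Set.mem_singleton_iff]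
      constructor
      · rintro ⟨hadj, hd⟩
        exact (hconn.dist_eq_zero_iff.mp hd).symm
      · rintro rfl
        exact ⟨(hga 0 (by norm_num)).symm, by simp [SimpleGraph.dist_self]⟩
    rw [hset, Set.ncard_singleton] at h
    exact h.symm
  -- positivity of intersection numbers
  have hb1pos : 1 ≤ b 1 := by
    have h := hb (g 0) (g 1) 1 hg1
    have hne : {z : V | G.Adj (g 1) z ∧ G.dist (g 0) z = 1 + 1}.Nonempty :=
      ⟨g 2, hga 1 (by norm_num), by simpa using hg2⟩
    have := (Set.ncard_pos (Set.toFinite _)).mpr hne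
    omega
  have hb2pos : 1 ≤ b 2 := by
    have h := hb (g 0) (g 2) 2 hg2
    have hne : {z : V | G.Adj (g 2) z ∧ G.dist (g 0) z = 2 + 1}.Nonempty :=
      ⟨g 3, hga 2 (by norm_num), by simpa using hg3⟩
    have := (Set.ncard_pos (Set.toFinite _)).mpr hne
    omega
  have hc2pos : 1 ≤ c 2 := by
    have h := hcax (g 0) (g 2) 2 (by norm_num) hg2
    have hne : {z : V | G.Adj (g 2) z ∧ G.dist (g 0) z = 2 - 1}.Nonempty :=
      ⟨g 1, (hga 1 (by norm_num)).symm, by simpa using hg1⟩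
    have := (Set.ncard_pos (Set.toFinite _)).mpr hne
    omega
  -- b 3 = 0
  have hb3 : b 3 = 0 := by
    have h := hb x₀ y₀ 3 hxy0
    have hset : {z : V | G.Adj y₀ z ∧ G.dist x₀ z = 3 + 1} = ∅ := by
      ext z
      simp only [Set.mem_setOf_eq, Set.mem_empty_iff_false, iff_false, not_and]
      intro _ hd
      have := hdle x₀ z
      omega
    rw [hset] at h
    simpa using h.symm
  -- every vertex has k neighbours
  have hk0 : ∀ y : V, {z : V | G.Adj y z}.ncard = k := by
    intro y
    have h := hb y y 0 (SimpleGraph.dist_self)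
    rw [hk]
    rw [← h]
    congr 1
    ext z
    simp only [Set.mem_setOf_eq, zero_add]
    constructor
    · intro hz
      exact ⟨hz, SimpleGraph.dist_eq_one_iff_adj.mpr hz⟩
    · rintro ⟨hz, _⟩
      exact hz
  -- triangle bounds for neighbours
  have htri : ∀ x y z : V, G.Adj y z →
      G.dist x z ≤ G.dist x y + 1 ∧ G.dist x y ≤ G.dist x z + 1 := by
    intro x y z h
    constructor
    · have h1 : G.dist x z ≤ G.dist x y + G.dist y z := hconn.dist_triangle
      have h2 : G.dist y z = 1 := SimpleGraph.dist_eq_one_iff_adj.mpr h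
      omega
    · have h1 : G.dist x y ≤ G.dist x z + G.dist z y := hconn.dist_triangle
      have h2 : G.dist z y = 1 := SimpleGraph.dist_eq_one_iff_adj.mpr h.symm
      omega
  -- the partition count
  have hcount : ∀ (x y : V) (j : ℕ), 1 ≤ j → G.dist x y = j →
      c j + ({z : V | G.Adj y z ∧ G.dist x z = j}.ncard + b j) = k := by
    intro x y j hj hxy
    have hS : {z : V | G.Adj y z} =
        ({z : V | G.Adj y z ∧ G.dist x z = j - 1} ∪
          {z : V | G.Adj y z ∧ G.dist x z = j}) ∪
        {z : V | G.Adj y z ∧ G.dist x z = j + 1} := by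
      ext z
      simp only [Set.mem_setOf_eq, Set.mem_union]
      constructor
      · intro hz
        obtain ⟨hle, hge⟩ := htri x y z hz
        rw [hxy] at hle hge
        have : G.dist x z = j - 1 ∨ G.dist x z = j ∨ G.dist x z = j + 1 := by omega
        tauto
      · rintro ((⟨h, _⟩ | ⟨h, _⟩) | ⟨h, _⟩) <;> exact h
    have hdisj1 : Disjoint {z : V | G.Adj y z ∧ G.dist x z = j - 1}
        {z : V | G.Adj y z ∧ G.dist x z = j} := by
      rw [Set.disjoint_left]
      rintro z ⟨_, h1⟩ ⟨_, h2⟩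
      omega
    have hdisj2 : Disjoint ({z : V | G.Adj y z ∧ G.dist x z = j - 1} ∪
        {z : V | G.Adj y z ∧ G.dist x z = j})
        {z : V | G.Adj y z ∧ G.dist x z = j + 1} := by
      rw [Set.disjoint_left]
      rintro z (⟨_, h1⟩ | ⟨_, h1⟩) ⟨_, h2⟩ <;> omega
    have hN := hk0 y
    rw [hS, Set.ncard_union_eq hdisj2 (Set.toFinite _) (Set.toFinite _),
      Set.ncard_union_eq hdisj1 (Set.toFinite _) (Set.toFinite _),
      hcax x y j hj hxy, hb x y j hxy] at hN
    omega
  -- matrices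
  set A := G.adjMatrix ℝ with hAdef
  set M : ℕ → Matrix V V ℝ :=
    fun i => Matrix.of fun x y => if G.dist x y = i then (1:ℝ) else 0 with hMdef
  have hM1 : M 1 = A := by
    ext x y
    simp only [hMdef, Matrix.of_apply, hAdef, SimpleGraph.adjMatrix_apply,
      SimpleGraph.dist_eq_one_iff_adj]
  have hmul : ∀ (i : ℕ) (x y : V), (M i * A) x y
      = ({z : V | G.Adj y z ∧ G.dist x z = i}.ncard : ℝ) := by
    intro i x y
    rw [Matrix.mul_apply]
    have h1 : ∀ z : V, M i x z * A z y
        = if G.Adj y z ∧ G.dist x z = i then (1:ℝ) else 0 := by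
      intro z
      simp only [hMdef, Matrix.of_apply, hAdef, SimpleGraph.adjMatrix_apply]
      by_cases h : G.Adj y z <;> by_cases h' : G.dist x z = i <;>
        simp [h, h', G.adj_comm]
    rw [Finset.sum_congr rfl fun z _ => h1 z, Finset.sum_boole]
    congr 1
    rw [← Set.ncard_coe_finset]
    congr 1
    ext z
    simp
  -- a helper for empty counts
  have hempty : ∀ (x y : V) (i : ℕ), (∀ z : V, ¬(G.Adj y z ∧ G.dist x z = i)) →
      ({z : V | G.Adj y z ∧ G.dist x z = i}.ncard : ℝ) = 0 := by
    intro x y i h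
    have : {z : V | G.Adj y z ∧ G.dist x z = i} = ∅ := by
      ext z; simpa using h z
    rw [this]
    simp
  -- the three matrix relations
  have hE1 : M 1 * A = (k:ℝ) • (1 : Matrix V V ℝ) + ((k:ℝ) - b 1 - 1) • M 1
      + (c 2 : ℝ) • M 2 := by
    ext x y
    rw [hmul]
    simp only [Matrix.add_apply, Matrix.smul_apply, Matrix.one_apply, hMdef,
      Matrix.of_apply, smul_eq_mul]
    have hj3 : G.dist x y ≤ 3 := hdle x y
    obtain ⟨j, hxy⟩ : ∃ j, G.dist x y = j := ⟨_, rfl⟩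
    rw [hxy]
    rw [hxy] at hj3
    interval_cases j
    · -- j = 0 : x = y, count = k
      have hxe : x = y := hconn.dist_eq_zero_iff.mp hxy
      subst hxe
      have hset : {z : V | G.Adj x z ∧ G.dist x z = 1} = {z : V | G.Adj x z} := by
        ext z
        simp only [Set.mem_setOf_eq, and_iff_left_iff_imp]
        exact fun hz => SimpleGraph.dist_eq_one_iff_adj.mpr hz
      rw [hset, hk0 x]
      norm_num
    · -- j = 1
      have hne : ¬ x = y := by
        intro h; subst h; simp [SimpleGraph.dist_self] at hxy
      have h := hcount x y 1 le_rfl hxy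
      rw [hc1] at h
      rw [if_neg hne, if_pos rfl, if_neg (by norm_num : ¬(1:ℕ) = 2)]
      push_cast [← h]
      ring
    · -- j = 2
      have hne : ¬ x = y := by
        intro h; subst h; simp [SimpleGraph.dist_self] at hxy
      have h := hcax x y 2 (by norm_num) hxy
      rw [(by norm_num : (2:ℕ) - 1 = 1)] at h
      rw [h, if_neg hne, if_neg (by norm_num : ¬(2:ℕ) = 1), if_pos rfl]
      ring
    · -- j = 3
      have hne : ¬ x = y := by
        intro h; subst h; simp [SimpleGraph.dist_self] at hxy
      rw [hempty x y 1 ?_]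
      · simp [hne]
      · intro z ⟨hz, hd⟩
        have := (htri x y z hz).2
        omega
  have hE2 : M 2 * A = (b 1 : ℝ) • M 1 + ((k:ℝ) - b 2 - c 2) • M 2
      + (c 3 : ℝ) • M 3 := by
    ext x y
    rw [hmul]
    simp only [Matrix.add_apply, Matrix.smul_apply, hMdef, Matrix.of_apply, smul_eq_mul]
    have hj3 : G.dist x y ≤ 3 := hdle x y
    obtain ⟨j, hxy⟩ : ∃ j, G.dist x y = j := ⟨_, rfl⟩
    rw [hxy]
    rw [hxy] at hj3
    interval_cases j
    · -- j = 0 : count of neighbours at distance 2 from itself = 0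
      have hxe : x = y := hconn.dist_eq_zero_iff.mp hxy
      subst hxe
      rw [hempty x x 2 ?_]
      · norm_num
      · rintro z ⟨hz, hd⟩
        rw [SimpleGraph.dist_eq_one_iff_adj.mpr hz] at hd
        omega
    · -- j = 1 : b 1
      have h := hb x y 1 hxy
      rw [(by norm_num : (1:ℕ) + 1 = 2)] at h
      rw [h, if_pos rfl, if_neg (by norm_num : ¬(1:ℕ) = 2), if_neg (by norm_num : ¬(1:ℕ) = 3)]
      ring
    · -- j = 2 : a 2
      have h := hcount x y 2 (by norm_num) hxy
      rw [if_neg (by norm_num : ¬(2:ℕ) = 1), if_pos rfl, if_neg (by norm_num : ¬(2:ℕ) = 3)]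
      push_cast [← h]
      ring
    · -- j = 3 : c 3
      have h := hcax x y 3 (by norm_num) hxy
      rw [(by norm_num : (3:ℕ) - 1 = 2)] at h
      rw [h, if_neg (by norm_num : ¬(3:ℕ) = 1), if_neg (by norm_num : ¬(3:ℕ) = 2), if_pos rfl]
      ring
  have hE3 : M 3 * A = (b 2 : ℝ) • M 2 + ((k:ℝ) - c 3) • M 3 := by
    ext x y
    rw [hmul]
    simp only [Matrix.add_apply, Matrix.smul_apply, hMdef, Matrix.of_apply, smul_eq_mul]
    have hj3 : G.dist x y ≤ 3 := hdle x y
    obtain ⟨j, hxy⟩ : ∃ j, G.dist x y = j := ⟨_, rfl⟩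
    rw [hxy]
    rw [hxy] at hj3
    interval_cases j
    · -- j = 0
      have hxe : x = y := hconn.dist_eq_zero_iff.mp hxy
      subst hxe
      rw [hempty x x 3 ?_]
      · norm_num
      · rintro z ⟨hz, hd⟩
        rw [SimpleGraph.dist_eq_one_iff_adj.mpr hz] at hd
        omega
    · -- j = 1 : distance 3 impossible from a neighbour of y
      have h : ({z : V | G.Adj y z ∧ G.dist x z = 3}.ncard : ℝ) = 0 := by
        apply hempty
        rintro z ⟨hz, hd⟩
        have := (htri x y z hz).1
        omega
      rw [h, if_neg (by norm_num : ¬(1:ℕ) = 2), if_neg (by norm_num : ¬(1:ℕ) = 3)]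
      ring
    · -- j = 2 : b 2
      have h := hb x y 2 hxy
      rw [(by norm_num : (2:ℕ) + 1 = 3)] at h
      rw [h, if_pos rfl, if_neg (by norm_num : ¬(2:ℕ) = 3)]
      ring
    · -- j = 3 : a 3 = k - c 3
      have h := hcount x y 3 (by norm_num) hxy
      rw [hb3] at h
      rw [if_neg (by norm_num : ¬(3:ℕ) = 2), if_pos rfl]
      push_cast [← h]
      ring
  -- eigenvalue equation
  have heig : ∀ θ : ℝ, θ ∈ spectrum ℝ A →
      (θ - ((k:ℝ) - c 3)) * (θ*(θ^2 - ((k:ℝ) - b 1 - 1)*θ - k) - (b 1:ℝ)*(c 2)*θ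
        - ((k:ℝ) - b 2 - c 2)*(θ^2 - ((k:ℝ) - b 1 - 1)*θ - k))
      - (b 2:ℝ)*(c 3)*(θ^2 - ((k:ℝ) - b 1 - 1)*θ - k) = 0 := by
    intro θ hθ
    rw [spectrum.mem_iff] at hθ
    have hdet : (algebraMap ℝ (Matrix V V ℝ) θ - A).det = 0 := by
      by_contra h
      exact hθ ((Matrix.isUnit_iff_isUnit_det _).mpr (isUnit_iff_ne_zero.mpr h))
    obtain ⟨v, hv0, hv⟩ := Matrix.exists_mulVec_eq_zero_iff.mpr hdet
    have hAv : A *ᵥ v = θ • v := by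
      have h1 : (algebraMap ℝ (Matrix V V ℝ) θ) *ᵥ v - A *ᵥ v = 0 := by
        rw [← Matrix.sub_mulVec]; exact hv
      have h2 : (algebraMap ℝ (Matrix V V ℝ) θ) *ᵥ v = θ • v := by
        rw [Algebra.algebraMap_eq_smul_one, Matrix.smul_mulVec, Matrix.one_mulVec]
      rw [h2] at h1
      exact (sub_eq_zero.mp h1).symm
    -- pass to a nonzero coordinate
    have hMA : ∀ i : ℕ, (M i * A) *ᵥ v = θ • ((M i) *ᵥ v) := by
      intro i
      rw [← Matrix.mulVec_mulVec, hAv, Matrix.mulVec_smul]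
    have hM1v : (M 1) *ᵥ v = θ • v := by rw [hM1, hAv]
    obtain ⟨idx, hvi⟩ := Function.ne_iff.mp hv0
    have hvi : v idx ≠ 0 := hvi
    have r1 : θ * (θ * v idx) = (k:ℝ) * v idx + ((k:ℝ) - b 1 - 1) * (θ * v idx)
        + (c 2 : ℝ) * ((M 2 *ᵥ v) idx) := by
      have h := congrFun (hMA 1) idx
      rw [hE1, hM1v] at h
      simpa [Matrix.add_mulVec, Matrix.smul_mulVec, Matrix.one_mulVec,
        Matrix.mulVec_smul, hM1v] using h.symm
    have r2 : θ * ((M 2 *ᵥ v) idx) = (b 1 : ℝ) * (θ * v idx)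
        + ((k:ℝ) - b 2 - c 2) * ((M 2 *ᵥ v) idx) + (c 3 : ℝ) * ((M 3 *ᵥ v) idx) := by
      have h := congrFun (hMA 2) idx
      rw [hE2] at h
      simpa [Matrix.add_mulVec, Matrix.smul_mulVec, Matrix.mulVec_smul, hM1v]
        using h.symm
    have r3 : θ * ((M 3 *ᵥ v) idx) = (b 2 : ℝ) * ((M 2 *ᵥ v) idx)
        + ((k:ℝ) - c 3) * ((M 3 *ᵥ v) idx) := by
      have h := congrFun (hMA 3) idx
      rw [hE3] at h
      simpa [Matrix.add_mulVec, Matrix.smul_mulVec, Matrix.mulVec_smul] using h.symm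
    have hfin : ((θ - ((k:ℝ) - c 3)) * (θ*(θ^2 - ((k:ℝ) - b 1 - 1)*θ - k) - (b 1:ℝ)*(c 2)*θ
        - ((k:ℝ) - b 2 - c 2)*(θ^2 - ((k:ℝ) - b 1 - 1)*θ - k))
        - (b 2:ℝ)*(c 3)*(θ^2 - ((k:ℝ) - b 1 - 1)*θ - k)) * v idx = 0 := by
      linear_combination ((θ - ((k:ℝ) - c 3))*(θ - ((k:ℝ) - b 2 - c 2)) - (b 2:ℝ)*(c 3)) * r1
        + ((θ - ((k:ℝ) - c 3)) * (c 2 : ℝ)) * r2 + ((c 2:ℝ)*(c 3)) * r3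
    rcases mul_eq_zero.mp hfin with h | h
    · exact h
    · exact absurd h hvi
  -- extract cubic roots
  set d2 : ℝ := (k:ℝ) - b 1 - c 2 with hd2def
  set d3 : ℝ := (k:ℝ) - c 3 - b 2 with hd3def
  set B : ℝ := (b 2:ℝ) * (c 2:ℝ) with hBdef
  set C : ℝ := (b 1:ℝ) with hCdef
  set al : ℝ := 1 - d2 - d3 with haldef
  set be : ℝ := d2*d3 - d2 - d3 - B - C with hbedef
  set ga : ℝ := d2*d3 - B + C*d3 with hgadef
  have hroot : ∀ θ : ℝ, θ ∈ spectrum ℝ A → θ < (k:ℝ) →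
      θ^3 + al*θ^2 + be*θ + ga = 0 := by
    intro θ hθ hlt
    have h := heig θ hθ
    have hfac : (θ - (k:ℝ)) * (θ^3 + al*θ^2 + be*θ + ga) = 0 := by
      rw [haldef, hbedef, hgadef, hBdef, hCdef, hd2def, hd3def]
      linear_combination h
    rcases mul_eq_zero.mp hfac with h' | h'
    · exact absurd h' (by intro hh; linarith [sub_eq_zero.mp hh])
    · exact h'
  have hmem : ∀ θ : ℝ, θ = θ₁ ∨ θ = θ₂ ∨ θ = θ₃ → θ ∈ spectrum ℝ A := by
    intro θ hθ
    rw [hspec]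
    rcases hθ with h | h | h <;> simp [h, Set.mem_insert_iff]
  have e1 := hroot θ₁ (hmem θ₁ (Or.inl rfl)) h01
  have e2 := hroot θ₂ (hmem θ₂ (Or.inr (Or.inl rfl))) (by linarith)
  have e3 := hroot θ₃ (hmem θ₃ (Or.inr (Or.inr rfl))) (by linarith)
  have hq0 := cubic_of_roots' (ne_of_gt h12) (ne_of_gt (lt_trans h23 h12))
    (ne_of_gt h23) e1 e2 e3
  have hq : ∀ x : ℝ, (x - θ₁)*(x - θ₂)*(x - θ₃)
      = (x+1)*(x-d2)*(x-d3) - B*(x+1) - C*(x-d3) := by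
    intro x
    rw [← hq0 x, haldef, hbedef, hgadef]
    ring
  have hBpos : (0:ℝ) < B := by
    rw [hBdef]
    have h1 : (1:ℝ) ≤ (b 2 : ℝ) := by exact_mod_cast hb2pos
    have h2 : (1:ℝ) ≤ (c 2 : ℝ) := by exact_mod_cast hc2pos
    nlinarith
  have hCpos : (0:ℝ) < C := by
    rw [hCdef]
    have h1 : (1:ℝ) ≤ (b 1 : ℝ) := by exact_mod_cast hb1pos
    linarith
  exact theta_key' hBpos hCpos h12 h23 hq
end

section
/- Let Γ be a distance-regular graph with diameter D ≥ 3, valency k, and intersection number c₂ ≤ b₁. If a₁ denotes the number of common neighbors of any adjacent pair, then a₁ ≤ (2(k−2))/3, and hence b₁ = k − a₁ − 1 ≥ (k+1)/3. -/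
open SimpleGraph Finset

lemma myWalk.length_drop {V : Type*} {G : SimpleGraph V} {u v : V} (p : G.Walk u v) (n : ℕ) :
    (p.drop n).length = p.length - n := by
  induction p generalizing n with
  | nil => simp [SimpleGraph.Walk.drop]
  | cons h q ih =>
    cases n with
    | zero => simp [SimpleGraph.Walk.drop]
    | succ n => simp [SimpleGraph.Walk.drop, ih]

/-- In a distance-regular graph of diameter `D ≥ 3` with valency `k` and `c₂ ≤ b₁`,
the intersection number `a₁ = k − b₁ − c₁` satisfies `a₁ ≤ 2(k−2)/3` and hence
`b₁ = k − a₁ − 1 ≥ (k+1)/3`. -/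
theorem a1_upper_bound {V : Type*} [Fintype V] [DecidableEq V]
    (G : SimpleGraph V) [DecidableRel G.Adj] (b c : ℕ → ℕ) (D : ℕ) (hD : 3 ≤ D)
    (hdrg : IsDistanceRegular G D b c)
    (k a₁ : ℕ) (hk : k = b 0) (ha₁ : a₁ = k - b 1 - c 1)
    (hc₂b₁ : c 2 ≤ b 1) (hb₁ : (b 1 : ℝ) = (k : ℝ) - a₁ - 1) :
    (a₁ : ℝ) ≤ 2 * ((k : ℝ) - 2) / 3 ∧ (b 1 : ℝ) ≥ ((k : ℝ) + 1) / 3 := by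
  obtain ⟨hconn, hle, ⟨x0, y0, hxy0⟩, hb, hc⟩ := hdrg
  -- degree = k everywhere
  have hdeg : ∀ x : V, (G.neighborFinset x).card = k := by
    intro x
    have h0 := hb x x 0 (by simp)
    have hset : {z : V | G.Adj x z ∧ G.dist x z = 0 + 1} = ↑(G.neighborFinset x) := by
      ext z
      simp only [Set.mem_setOf_eq, mem_coe, mem_neighborFinset, zero_add,
        dist_eq_one_iff_adj, and_self]
    rw [hset, Set.ncard_coe_finset] at h0
    rw [hk, ← h0]
  -- common neighbors of adjacent vertices
  have hadj_card : ∀ x y : V, G.Adj x y →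
      (G.neighborFinset x ∩ G.neighborFinset y).card = a₁ := by
    intro x y hxy
    have hd1 : G.dist x y = 1 := dist_eq_one_iff_adj.mpr hxy
    set N := G.neighborFinset y with hN
    set S0 := N.filter (fun z => G.dist x z = 0) with hS0
    set S1 := N.filter (fun z => G.dist x z = 1) with hS1
    set S2 := N.filter (fun z => G.dist x z = 2) with hS2
    have h012 : ∀ z ∈ N, G.dist x z = 0 ∨ G.dist x z = 1 ∨ G.dist x z = 2 := by
      intro z hz
      rw [hN, mem_neighborFinset] at hz
      have hdistyz : G.dist y z = 1 := dist_eq_one_iff_adj.mpr hz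
      have := hconn.dist_triangle (u := x) (v := y) (w := z)
      omega
    have hsplit : N = S0 ∪ S1 ∪ S2 := by
      ext z
      by_cases hz : z ∈ N
      · simp only [hS0, hS1, hS2, mem_union, mem_filter, hz, true_and]
        have := h012 z hz
        tauto
      · simp only [hS0, hS1, hS2, mem_union, mem_filter, hz, false_and, or_self]
    have hdisj01 : Disjoint S0 S1 := by
      rw [Finset.disjoint_left]; intro z h1 h2
      rw [hS0, mem_filter] at h1; rw [hS1, mem_filter] at h2; omega
    have hdisj012 : Disjoint (S0 ∪ S1) S2 := by
      rw [Finset.disjoint_left]; intro z h1 h2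
      rw [hS2, mem_filter] at h2
      rw [mem_union, hS0, hS1, mem_filter, mem_filter] at h1; omega
    have hcard : k = S0.card + S1.card + S2.card := by
      rw [← hdeg y, ← hN, hsplit, card_union_of_disjoint hdisj012,
        card_union_of_disjoint hdisj01]
    -- S0 has card c 1
    have hc1 := hc x y 1 le_rfl hd1
    have hs0set : {z : V | G.Adj y z ∧ G.dist x z = 1 - 1} = ↑S0 := by
      ext z
      simp only [Set.mem_setOf_eq, hS0, coe_filter, mem_neighborFinset, hN]
    rw [hs0set, Set.ncard_coe_finset] at hc1
    -- S2 has card b 1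
    have hb1 := hb x y 1 hd1
    have hs2set : {z : V | G.Adj y z ∧ G.dist x z = 1 + 1} = ↑S2 := by
      ext z
      simp only [Set.mem_setOf_eq, hS2, coe_filter, mem_neighborFinset, hN]
    rw [hs2set, Set.ncard_coe_finset] at hb1
    -- S1 = N x ∩ N y
    have hs1 : G.neighborFinset x ∩ G.neighborFinset y = S1 := by
      ext z
      simp only [mem_inter, mem_neighborFinset, hS1, hN, mem_filter, mem_neighborFinset,
        dist_eq_one_iff_adj]
      tauto
    rw [hs1, ha₁]
    omega
  -- common neighbors at distance 2
  have hdist2_card : ∀ y z : V, G.dist y z = 2 →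
      (G.neighborFinset y ∩ G.neighborFinset z).card = c 2 := by
    intro y z hd2
    have hc2 := hc y z 2 (by norm_num) hd2
    have hset : {w : V | G.Adj z w ∧ G.dist y w = 2 - 1} = ↑(G.neighborFinset y ∩ G.neighborFinset z) := by
      ext w
      simp only [Set.mem_setOf_eq, mem_coe, mem_inter, mem_neighborFinset]
      rw [show (2 : ℕ) - 1 = 1 from rfl, dist_eq_one_iff_adj]
      tauto
    rw [hset, Set.ncard_coe_finset] at hc2
    exact hc2
  -- find a geodesic configuration: x0 - x - z with dist x0 z = 2
  have hconfig : ∃ x z : V, G.Adj x0 x ∧ G.Adj x z ∧ G.dist x0 z = 2 := by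
    obtain ⟨p, hp⟩ := hconn.exists_walk_length_eq_dist x0 y0
    rw [hxy0] at hp
    refine ⟨p.getVert 1, p.getVert 2, ?_, ?_, ?_⟩
    · have := p.adj_getVert_succ (i := 0) (by omega)
      simpa using this
    · exact p.adj_getVert_succ (i := 1) (by omega)
    · have hadj_yx : G.Adj x0 (p.getVert 1) := by
        have := p.adj_getVert_succ (i := 0) (by omega); simpa using this
      have hadj_xz : G.Adj (p.getVert 1) (p.getVert 2) := p.adj_getVert_succ (i := 1) (by omega)
      have hle2 : G.dist x0 (p.getVert 2) ≤ 2 := by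
        have ht := hconn.dist_triangle (u := x0) (v := p.getVert 1) (w := p.getVert 2)
        have h1 : G.dist x0 (p.getVert 1) = 1 := dist_eq_one_iff_adj.mpr hadj_yx
        have h2 : G.dist (p.getVert 1) (p.getVert 2) = 1 := dist_eq_one_iff_adj.mpr hadj_xz
        omega
      have hge : ¬ G.dist x0 (p.getVert 2) ≤ 1 := by
        intro hcon
        have hdz : G.dist (p.getVert 2) y0 ≤ D - 2 := by
          have := SimpleGraph.dist_le (p.drop 2)
          rwa [myWalk.length_drop, hp] at this
        have ht := hconn.dist_triangle (u := x0) (v := p.getVert 2) (w := y0)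
        omega
      omega
  obtain ⟨x, z, hadj_yx, hadj_xz, hdistz⟩ := hconfig
  -- the counting argument
  have hxy' : (G.neighborFinset x ∩ G.neighborFinset x0).card = a₁ := hadj_card x x0 hadj_yx.symm
  have hxz' : (G.neighborFinset x ∩ G.neighborFinset z).card = a₁ := hadj_card x z hadj_xz
  have hyz : (G.neighborFinset x0 ∩ G.neighborFinset z).card = c 2 := hdist2_card x0 z hdistz
  have hznotNy : z ∉ G.neighborFinset x0 := by
    rw [mem_neighborFinset]
    intro hcon
    have := dist_eq_one_iff_adj.mpr hcon
    omega
  have hynotNz : x0 ∉ G.neighborFinset z := by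
    rw [mem_neighborFinset]
    intro hcon
    have : G.dist x0 z = 1 := dist_eq_one_iff_adj.mpr hcon.symm
    omega
  have hcardA : (insert z (G.neighborFinset x ∩ G.neighborFinset x0)).card = a₁ + 1 := by
    rw [card_insert_of_notMem (by simp [hznotNy]), hxy']
  have hcardB : (insert x0 (G.neighborFinset x ∩ G.neighborFinset z)).card = a₁ + 1 := by
    rw [card_insert_of_notMem (by simp [hynotNz]), hxz']
  have hsubU : insert z (G.neighborFinset x ∩ G.neighborFinset x0) ∪
      insert x0 (G.neighborFinset x ∩ G.neighborFinset z) ⊆ G.neighborFinset x := by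
    intro w hw
    simp only [mem_union, mem_insert, mem_inter, mem_neighborFinset] at hw
    rw [mem_neighborFinset]
    rcases hw with (rfl | hw) | (rfl | hw)
    · exact hadj_xz
    · exact hw.1
    · exact hadj_yx.symm
    · exact hw.1
  have hxmem : x ∈ G.neighborFinset x0 ∩ G.neighborFinset z := by
    rw [mem_inter, mem_neighborFinset, mem_neighborFinset]
    exact ⟨hadj_yx, hadj_xz.symm⟩
  have hsubI : insert z (G.neighborFinset x ∩ G.neighborFinset x0) ∩
      insert x0 (G.neighborFinset x ∩ G.neighborFinset z) ⊆
      (G.neighborFinset x0 ∩ G.neighborFinset z).erase x := by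
    intro w hw
    simp only [mem_inter, mem_insert, mem_neighborFinset] at hw
    obtain ⟨h1, h2⟩ := hw
    rw [mem_erase, mem_inter, mem_neighborFinset, mem_neighborFinset]
    rcases h1 with rfl | h1
    · rcases h2 with rfl | h2
      · exfalso; rw [SimpleGraph.dist_self] at hdistz; omega
      · exact absurd h2.2 (G.irrefl)
    · rcases h2 with rfl | h2
      · exact absurd h1.2 (G.irrefl)
      · exact ⟨fun hwx => G.irrefl (hwx ▸ h1.1), h1.2, h2.2⟩
  have hc2pos : 1 ≤ c 2 := by
    rw [← hyz]
    exact card_pos.mpr ⟨x, hxmem⟩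
  have hcardI : (insert z (G.neighborFinset x ∩ G.neighborFinset x0) ∩
      insert x0 (G.neighborFinset x ∩ G.neighborFinset z)).card ≤ c 2 - 1 := by
    calc _ ≤ ((G.neighborFinset x0 ∩ G.neighborFinset z).erase x).card := card_le_card hsubI
      _ = c 2 - 1 := by rw [card_erase_of_mem hxmem, hyz]
  have hcardU : (insert z (G.neighborFinset x ∩ G.neighborFinset x0) ∪
      insert x0 (G.neighborFinset x ∩ G.neighborFinset z)).card ≤ k := by
    calc _ ≤ (G.neighborFinset x).card := card_le_card hsubU
      _ = k := hdeg x
  have hkey : 2 * a₁ + 3 ≤ k + c 2 := by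
    have := Finset.card_union_add_card_inter (insert z (G.neighborFinset x ∩ G.neighborFinset x0))
      (insert x0 (G.neighborFinset x ∩ G.neighborFinset z))
    omega
  have hkR : (2 * a₁ + 3 : ℝ) ≤ k + c 2 := by exact_mod_cast hkey
  have hcbR : (c 2 : ℝ) ≤ b 1 := by exact_mod_cast hc₂b₁
  constructor
  · linarith
  · linarith
end

section
/- Let Γ be a distance-regular graph with diameter 3, valency k, and suppose its second largest eigenvalue θ₁ equals (a₁ + √(a₁² + 4k))/2. Then θ₁ = a₃ and k = a₃(a₃ − a₁). -/
open Finset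

set_option maxHeartbeats 2000000 in
/-- Shilla characterization: if a distance-regular graph of diameter 3 with valency
`k` has second largest eigenvalue `θ₁ = (a₁ + √(a₁² + 4k))/2`, then `θ₁ = a₃` and
`k = a₃(a₃ − a₁)`, where `a₁ = k − b 1 − c 1` and `a₃ = k − c 3`. -/
theorem shilla_characterization {V : Type*} [Fintype V] [DecidableEq V]
    (G : SimpleGraph V) [DecidableRel G.Adj] (b c : ℕ → ℕ)
    (hdrg : IsDistanceRegular G 3 b c)
    (k a₁ a₃ : ℕ) (hk : k = b 0) (hk3 : 3 ≤ k)
    (ha₁ : a₁ = k - b 1 - c 1) (ha₃ : a₃ = k - c 3)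
    (θ₁ : ℝ) (hmem : θ₁ ∈ spectrum ℝ (G.adjMatrix ℝ)) (hne : θ₁ ≠ (k : ℝ))
    (hmax : ∀ μ ∈ spectrum ℝ (G.adjMatrix ℝ), μ ≠ (k : ℝ) → μ ≤ θ₁)
    (hshilla : θ₁ = ((a₁ : ℝ) + Real.sqrt ((a₁ : ℝ) ^ 2 + 4 * k)) / 2) :
    θ₁ = (a₃ : ℝ) ∧ (k : ℝ) = (a₃ : ℝ) * ((a₃ : ℝ) - (a₁ : ℝ)) := by
  obtain ⟨hconn, hdle, ⟨x₃, y₃, hd3⟩, hb, hc⟩ := hdrg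
  -- Finset versions of the intersection number conditions
  have hb' : ∀ (x y : V) (i : ℕ), G.dist x y = i →
      (univ.filter fun z => G.Adj y z ∧ G.dist x z = i + 1).card = b i := by
    intro x y i h
    have := hb x y i h
    rwa [Set.ncard_eq_toFinset_card', Set.toFinset_setOf] at this
  have hc' : ∀ (x y : V) (i : ℕ), 1 ≤ i → G.dist x y = i →
      (univ.filter fun z => G.Adj y z ∧ G.dist x z = i - 1).card = c i := by
    intro x y i h1 h
    have := hc x y i h1 h
    rwa [Set.ncard_eq_toFinset_card', Set.toFinset_setOf] at this
  -- predecessor on a geodesic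
  have hpred : ∀ (x y : V) (i : ℕ), G.dist x y = i + 1 → ∃ z, G.Adj y z ∧ G.dist x z = i := by
    intro x y i h
    obtain ⟨p, hp⟩ := hconn.exists_walk_length_eq_dist x y
    have hne : y ≠ x := by
      intro e; subst e; simp [SimpleGraph.dist_self] at h
    obtain ⟨z, hadj, p', hp'⟩ := SimpleGraph.Walk.exists_eq_cons_of_ne hne p.reverse
    refine ⟨z, hadj, ?_⟩
    have hlen : p'.length = i := by
      have := congrArg SimpleGraph.Walk.length hp'
      simp [SimpleGraph.Walk.length_reverse, hp, h] at this
      omega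
    have h1 : G.dist x z ≤ i := by
      have := SimpleGraph.dist_le p'.reverse
      simpa [SimpleGraph.Walk.length_reverse, hlen] using this
    have h2 : G.dist x y ≤ G.dist x z + 1 := by
      have ht := hconn.dist_triangle (u := x) (v := z) (w := y)
      have hzy : G.dist z y = 1 := SimpleGraph.dist_eq_one_iff_adj.mpr hadj.symm
      omega
    omega
  -- vertices on a geodesic of length 3
  obtain ⟨z₂, hz₂adj, hz₂⟩ := hpred x₃ y₃ 2 hd3
  obtain ⟨z₁, hz₁adj, hz₁⟩ := hpred x₃ z₂ 1 hz₂
  obtain ⟨z₀, hz₀adj, hz₀⟩ := hpred x₃ z₁ 0 hz₁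
  have hz₀x : z₀ = x₃ := ((hconn.dist_eq_zero_iff).mp hz₀).symm
  -- c 1 = 1
  have hc1 : c 1 = 1 := by
    have h := hc' x₃ z₁ 1 le_rfl hz₁
    have : (univ.filter fun z => G.Adj z₁ z ∧ G.dist x₃ z = 1 - 1) = {x₃} := by
      ext w
      simp only [mem_filter, mem_univ, true_and, mem_singleton]
      constructor
      · rintro ⟨-, hw⟩
        exact ((hconn.dist_eq_zero_iff).mp hw).symm
      · rintro rfl
        exact ⟨hz₀x ▸ hz₀adj, SimpleGraph.dist_self⟩
    rw [this] at h
    simpa using h.symm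
  -- positivity of c 2, c 3, b 1
  have hc2pos : 1 ≤ c 2 := by
    have h := hc' x₃ z₂ 2 (by norm_num) hz₂
    rw [← h]
    refine Finset.card_pos.mpr ⟨z₁, ?_⟩
    simp only [mem_filter, mem_univ, true_and]
    exact ⟨hz₁adj, hz₁⟩
  have hc3pos : 1 ≤ c 3 := by
    have h := hc' x₃ y₃ 3 (by norm_num) hd3
    rw [← h]
    refine Finset.card_pos.mpr ⟨z₂, ?_⟩
    simp only [mem_filter, mem_univ, true_and]
    exact ⟨hz₂adj, hz₂⟩
  have hb1pos : 1 ≤ b 1 := by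
    have h := hb' x₃ z₁ 1 hz₁
    rw [← h]
    refine Finset.card_pos.mpr ⟨z₂, ?_⟩
    simp only [mem_filter, mem_univ, true_and]
    exact ⟨hz₁adj.symm, hz₂⟩
  -- θ₁ > 0 and the quadratic equation θ₁² = a₁ θ₁ + k
  have hkpos : (0:ℝ) < (k:ℝ) := by
    have : (3:ℝ) ≤ (k:ℝ) := by exact_mod_cast hk3
    linarith
  have hsqrt_nonneg : (0:ℝ) ≤ (a₁:ℝ) ^ 2 + 4 * k := by positivity
  have hsq : Real.sqrt ((a₁:ℝ) ^ 2 + 4 * k) ^ 2 = (a₁:ℝ) ^ 2 + 4 * k :=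
    Real.sq_sqrt hsqrt_nonneg
  have hsqrt_pos : 0 < Real.sqrt ((a₁:ℝ) ^ 2 + 4 * k) := by
    apply Real.sqrt_pos.mpr
    positivity
  have hθpos : 0 < θ₁ := by
    rw [hshilla]
    have : (0:ℝ) ≤ (a₁:ℝ) := Nat.cast_nonneg _
    linarith
  have hquad : θ₁ ^ 2 = (a₁:ℝ) * θ₁ + k := by
    have h2 : 2 * θ₁ - (a₁:ℝ) = Real.sqrt ((a₁:ℝ) ^ 2 + 4 * k) := by
      rw [hshilla]; ring
    have h3 : (2 * θ₁ - (a₁:ℝ)) ^ 2 = (a₁:ℝ) ^ 2 + 4 * k := by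
      rw [h2, hsq]
    nlinarith [h3]
  -- eigenvector
  rw [← AlgEquiv.spectrum_eq (Matrix.toLinAlgEquiv' : Matrix V V ℝ ≃ₐ[ℝ] _)] at hmem
  obtain ⟨v, hv⟩ := (Module.End.hasEigenvalue_iff_mem_spectrum.mpr hmem).exists_hasEigenvector
  have heig : ∀ y, ∑ w ∈ G.neighborFinset y, v w = θ₁ * v y := by
    intro y
    have := congrFun hv.apply_eq_smul y
    simpa [Matrix.toLinAlgEquiv'_apply, SimpleGraph.adjMatrix_mulVec_apply] using this
  obtain ⟨x, hx'⟩ := Function.ne_iff.mp hv.2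
  have hx : v x ≠ 0 := by simpa using hx'
  -- distance spheres around x and sphere sums
  set S : ℕ → Finset V := fun i => univ.filter (fun y => G.dist x y = i) with hS
  have hSmem : ∀ (j : ℕ) (z : V), z ∈ S j ↔ G.dist x z = j := by
    intro j z; simp [hS]
  set u : ℕ → ℝ := fun j => ∑ y ∈ S j, v y with hu
  have huapp : ∀ j, u j = ∑ y ∈ S j, v y := fun j => rfl
  -- the key exchange identity
  have hswap : ∀ i : ℕ, θ₁ * u i = ∑ j ∈ Finset.range 4, ∑ z ∈ S j,
      ((univ.filter fun y => G.Adj z y ∧ G.dist x y = i).card : ℝ) * v z := by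
    intro i
    have h1 : θ₁ * u i = ∑ y ∈ S i, ∑ z ∈ univ.filter (G.Adj y), v z := by
      rw [huapp i, Finset.mul_sum]
      refine Finset.sum_congr rfl fun y _ => ?_
      rw [← SimpleGraph.neighborFinset_eq_filter, heig y]
    have h2 : ∑ y ∈ S i, ∑ z ∈ univ.filter (G.Adj y), v z
        = ∑ z ∈ univ, ((univ.filter fun y => G.Adj z y ∧ G.dist x y = i).card : ℝ) * v z := by
      calc ∑ y ∈ S i, ∑ z ∈ univ.filter (G.Adj y), v z
          = ∑ y ∈ S i, ∑ z ∈ univ, if G.Adj y z then v z else 0 := by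
            refine Finset.sum_congr rfl fun y _ => ?_
            rw [Finset.sum_filter]
        _ = ∑ z ∈ univ, ∑ y ∈ S i, if G.Adj y z then v z else 0 := Finset.sum_comm
        _ = ∑ z ∈ univ, ((univ.filter fun y => G.Adj z y ∧ G.dist x y = i).card : ℝ) * v z := by
            refine Finset.sum_congr rfl fun z _ => ?_
            have hfe : Finset.filter (fun y => G.Adj y z) (S i)
                = Finset.filter (fun y => G.Adj z y ∧ G.dist x y = i) univ := by
              rw [hS, Finset.filter_filter]
              ext y
              simp only [mem_filter, mem_univ, true_and]
              constructor
              · rintro ⟨hd, hadj⟩; exact ⟨hadj.symm, hd⟩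
              · rintro ⟨hadj, hd⟩; exact ⟨hd, hadj.symm⟩
            rw [← Finset.sum_filter, hfe, Finset.sum_const, nsmul_eq_mul]
    have h3 : ∑ z ∈ univ, ((univ.filter fun y => G.Adj z y ∧ G.dist x y = i).card : ℝ) * v z
        = ∑ j ∈ Finset.range 4, ∑ z ∈ S j,
            ((univ.filter fun y => G.Adj z y ∧ G.dist x y = i).card : ℝ) * v z := by
      rw [hS]
      exact (Finset.sum_fiberwise_of_maps_to (fun z _ => Finset.mem_range.mpr
        (Nat.lt_succ_of_le (hdle x z))) _).symm
    rw [h1, h2, h3]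
  -- count lemmas
  have hzero : ∀ (i j : ℕ) (z : V), G.dist x z = j → (j + 1 < i ∨ i + 1 < j) →
      (univ.filter fun y => G.Adj z y ∧ G.dist x y = i).card = 0 := by
    intro i j z hz hij
    rw [Finset.card_eq_zero, Finset.filter_eq_empty_iff]
    rintro y - ⟨hadj, hy⟩
    have h1 := hconn.dist_triangle (u := x) (v := z) (w := y)
    have h2 := hconn.dist_triangle (u := x) (v := y) (w := z)
    have e1 : G.dist z y = 1 := SimpleGraph.dist_eq_one_iff_adj.mpr hadj
    have e2 : G.dist y z = 1 := SimpleGraph.dist_eq_one_iff_adj.mpr hadj.symm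
    omega
  have h00 : ∀ z : V, G.dist x z = 0 →
      (univ.filter fun y => G.Adj z y ∧ G.dist x y = 0).card = 0 := by
    intro z hz
    rw [Finset.card_eq_zero, Finset.filter_eq_empty_iff]
    rintro y - ⟨hadj, hy⟩
    have e1 : x = y := (hconn.dist_eq_zero_iff).mp hy
    have e2 : x = z := (hconn.dist_eq_zero_iff).mp hz
    subst e1; subst e2
    exact G.irrefl hadj
  have hdeg : ∀ z : V, (univ.filter (G.Adj z)).card = k := by
    intro z
    have h := hb' z z 0 SimpleGraph.dist_self
    rw [hk]
    rw [← h]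
    congr 1
    apply Finset.filter_congr
    intro y _
    constructor
    · intro h'; exact ⟨h', SimpleGraph.dist_eq_one_iff_adj.mpr h'⟩
    · rintro ⟨h', -⟩; exact h'
  have hpart : ∀ (j : ℕ) (z : V), 1 ≤ j → j ≤ 2 → G.dist x z = j →
      (univ.filter fun y => G.Adj z y ∧ G.dist x y = j).card + b j + c j = k := by
    intro j z hj1 hj2 hz
    have hsub : univ.filter (G.Adj z) =
        (univ.filter fun y => G.Adj z y ∧ G.dist x y = j) ∪
        ((univ.filter fun y => G.Adj z y ∧ G.dist x y = j + 1) ∪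
         (univ.filter fun y => G.Adj z y ∧ G.dist x y = j - 1)) := by
      ext y
      simp only [mem_filter, mem_union, mem_univ, true_and]
      constructor
      · intro h
        have h1 := hconn.dist_triangle (u := x) (v := z) (w := y)
        have h2 := hconn.dist_triangle (u := x) (v := y) (w := z)
        have e1 : G.dist z y = 1 := SimpleGraph.dist_eq_one_iff_adj.mpr h
        have e2 : G.dist y z = 1 := SimpleGraph.dist_eq_one_iff_adj.mpr h.symm
        have : G.dist x y = j ∨ G.dist x y = j + 1 ∨ G.dist x y = j - 1 := by omega
        tauto
      · tauto
    have hd1 : Disjoint (univ.filter fun y => G.Adj z y ∧ G.dist x y = j)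
        ((univ.filter fun y => G.Adj z y ∧ G.dist x y = j + 1) ∪
         (univ.filter fun y => G.Adj z y ∧ G.dist x y = j - 1)) := by
      simp only [Finset.disjoint_left, mem_filter, mem_union, mem_univ, true_and]
      rintro y ⟨-, hy⟩ (⟨-, hy'⟩ | ⟨-, hy'⟩) <;> omega
    have hd2 : Disjoint (univ.filter fun y => G.Adj z y ∧ G.dist x y = j + 1)
        (univ.filter fun y => G.Adj z y ∧ G.dist x y = j - 1) := by
      simp only [Finset.disjoint_left, mem_filter, mem_univ, true_and]
      rintro y ⟨-, hy⟩ ⟨-, hy'⟩; omega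
    have := hdeg z
    rw [hsub, Finset.card_union_of_disjoint hd1, Finset.card_union_of_disjoint hd2,
      hb' x z j hz, hc' x z j hj1 hz] at this
    omega
  have hpart3 : ∀ z : V, G.dist x z = 3 →
      (univ.filter fun y => G.Adj z y ∧ G.dist x y = 3).card + c 3 = k := by
    intro z hz
    have hsub : univ.filter (G.Adj z) =
        (univ.filter fun y => G.Adj z y ∧ G.dist x y = 3) ∪
        (univ.filter fun y => G.Adj z y ∧ G.dist x y = 2) := by
      ext y
      simp only [mem_filter, mem_union, mem_univ, true_and]
      constructor
      · intro h
        have h2 := hconn.dist_triangle (u := x) (v := z) (w := y)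
        have h3 := hconn.dist_triangle (u := x) (v := y) (w := z)
        have e1 : G.dist z y = 1 := SimpleGraph.dist_eq_one_iff_adj.mpr h
        have e2 : G.dist y z = 1 := SimpleGraph.dist_eq_one_iff_adj.mpr h.symm
        have h4 := hdle x y
        have : G.dist x y = 3 ∨ G.dist x y = 2 := by omega
        tauto
      · tauto
    have hd1 : Disjoint (univ.filter fun y => G.Adj z y ∧ G.dist x y = 3)
        (univ.filter fun y => G.Adj z y ∧ G.dist x y = 2) := by
      simp only [Finset.disjoint_left, mem_filter, mem_univ, true_and]
      rintro y ⟨-, hy⟩ ⟨-, hy'⟩; omega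
    have := hdeg z
    rw [hsub, Finset.card_union_of_disjoint hd1] at this
    have hc3 : #(univ.filter fun y => G.Adj z y ∧ G.dist x y = 2) = c 3 :=
      hc' x z 3 (by norm_num) hz
    omega
  -- general equation builder
  have key : ∀ (i : ℕ) (n : ℕ → ℕ), (∀ (j : ℕ) (z : V), j < 4 → G.dist x z = j →
      (univ.filter fun y => G.Adj z y ∧ G.dist x y = i).card = n j) →
      θ₁ * u i = ∑ j ∈ Finset.range 4, (n j : ℝ) * u j := by
    intro i n hn
    rw [hswap i]
    refine Finset.sum_congr rfl fun j hj => ?_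
    rw [huapp j, Finset.mul_sum]
    refine Finset.sum_congr rfl fun z hz => ?_
    rw [hn j z (Finset.mem_range.mp hj) ((hSmem j z).mp hz)]
  -- the four equations
  have E0 : θ₁ * u 0 = (c 1 : ℝ) * u 1 := by
    have h := key 0 (fun j => if j = 1 then c 1 else 0) ?_
    · simp only [Finset.sum_range_succ, Finset.sum_range_zero] at h
      norm_num at h
      linarith [h]
    · intro j z hj hz
      interval_cases j
      · exact h00 z hz
      · exact hc' x z 1 le_rfl hz
      · exact hzero 0 2 z hz (by omega)
      · exact hzero 0 3 z hz (by omega)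
  have E1 : θ₁ * u 1 = (k:ℝ) * u 0 + (a₁:ℝ) * u 1 + (c 2:ℝ) * u 2 := by
    have h := key 1 (fun j => if j = 0 then k else if j = 1 then a₁ else if j = 2 then c 2 else 0) ?_
    · simp only [Finset.sum_range_succ, Finset.sum_range_zero] at h
      norm_num at h
      linarith [h]
    · intro j z hj hz
      interval_cases j
      · have h1 := hb' x z 0 hz
        rw [← hk] at h1
        exact h1
      · have h1 := hpart 1 z le_rfl (by norm_num) hz
        show #(univ.filter fun y => G.Adj z y ∧ G.dist x y = 1) = a₁
        omega
      · exact hc' x z 2 (by norm_num) hz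
      · exact hzero 1 3 z hz (by omega)
  have E2 : θ₁ * u 2 = (b 1:ℝ) * u 1 + ((k - b 2 - c 2 : ℕ):ℝ) * u 2 + (c 3:ℝ) * u 3 := by
    have h := key 2 (fun j => if j = 0 then 0 else if j = 1 then b 1
        else if j = 2 then k - b 2 - c 2 else c 3) ?_
    · simp only [Finset.sum_range_succ, Finset.sum_range_zero] at h
      norm_num at h
      linarith [h]
    · intro j z hj hz
      interval_cases j
      · exact hzero 2 0 z hz (by omega)
      · exact hb' x z 1 hz
      · have h1 := hpart 2 z (by norm_num) le_rfl hz
        show #(univ.filter fun y => G.Adj z y ∧ G.dist x y = 2) = k - b 2 - c 2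
        omega
      · exact hc' x z 3 (by norm_num) hz
  have E3 : θ₁ * u 3 = (b 2:ℝ) * u 2 + (a₃:ℝ) * u 3 := by
    have h := key 3 (fun j => if j = 0 then 0 else if j = 1 then 0
        else if j = 2 then b 2 else a₃) ?_
    · simp only [Finset.sum_range_succ, Finset.sum_range_zero] at h
      norm_num at h
      linarith [h]
    · intro j z hj hz
      interval_cases j
      · exact hzero 3 0 z hz (by omega)
      · exact hzero 3 1 z hz (by omega)
      · exact hb' x z 2 hz
      · have h1 := hpart3 z hz
        show #(univ.filter fun y => G.Adj z y ∧ G.dist x y = 3) = a₃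
        omega
  -- u 0 = v x ≠ 0
  have hu0 : u 0 = v x := by
    have hS0 : S 0 = {x} := by
      ext y
      simp only [hS, mem_filter, mem_univ, true_and, mem_singleton]
      rw [hconn.dist_eq_zero_iff]
      exact eq_comm
    rw [huapp 0, hS0, Finset.sum_singleton]
  have hu0ne : u 0 ≠ 0 := by rw [hu0]; exact hx
  -- final algebra
  rw [hc1] at E0
  norm_num at E0
  -- E0 : θ₁ * u 0 = u 1
  have hU2 : u 2 = 0 := by
    have hc2R : (0:ℝ) < (c 2 : ℝ) := by exact_mod_cast hc2pos
    have hz2 : (c 2:ℝ) * u 2 = 0 := by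
      linear_combination (-1 : ℝ) * E1 - (θ₁ - (a₁:ℝ)) * E0 + u 0 * hquad
    rcases mul_eq_zero.mp hz2 with h | h
    · exact absurd h (by positivity)
    · exact h
  have hU3 : (c 3:ℝ) * u 3 = -(b 1:ℝ) * θ₁ * u 0 := by
    rw [hU2] at E2
    linear_combination (-1:ℝ) * E2 + (b 1 : ℝ) * E0
  have hU3ne : u 3 ≠ 0 := by
    intro h
    rw [h, mul_zero] at hU3
    have hb1R : (0:ℝ) < (b 1 : ℝ) := by exact_mod_cast hb1pos
    have hne0 : (b 1:ℝ) * θ₁ * u 0 ≠ 0 := by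
      apply mul_ne_zero (mul_ne_zero (by positivity) (by positivity)) hu0ne
    apply hne0
    linarith [hU3]
  have hθa3 : θ₁ = (a₃:ℝ) := by
    rw [hU2] at E3
    have hz3 : (θ₁ - (a₃:ℝ)) * u 3 = 0 := by linear_combination E3
    rcases mul_eq_zero.mp hz3 with h | h
    · linarith [h]
    · exact absurd h hU3ne
  refine ⟨hθa3, ?_⟩
  have hfin : (a₃:ℝ) ^ 2 - (a₁:ℝ) * (a₃:ℝ) = k := by
    rw [← hθa3]; linarith [hquad]
  rw [← hfin]; ring
end
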